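/- arXiv:2001.06305 — 5 statements merged into one kernel-verified Lean document; each statement's English description precedes it below -/
import Mathlib

section
/- Let H be an n×n complex Hermitian matrix with simple spectrum, orthonormal eigenbasis v_1, …, v_n and eigenvalues λ_1 < ⋯ < λ_n. Then for every unit vector ψ0 ∈ ℂ^n and every standard basis vector f, the time-averaged probability (1/T) ∫₀^T |⟨f, e^{−itH} ψ0⟩|² dt converges, as T → ∞, to the limiting probability Σ_{i=1}^n |⟨f, v_i⟩|² |⟨v_i, ψ0⟩|². -/
open scoped BigOperators

open scoped Matrix
open Filter


-- completeness of an orthonormal family of n vectors in ℂ^n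
lemma onb_complete {n : ℕ} (v : Fin n → (Fin n → ℂ))
    (hortho : ∀ i j, ∑ k, star (v i k) * v j k = if i = j then 1 else 0) :
    ∀ m k : Fin n, (∑ i, star (v i m) * v i k) = if m = k then 1 else 0 := by
  classical
  have hUU : (Matrix.of v) * (Matrix.of v)ᴴ = 1 := by
    ext i j
    have := congrArg (starRingEnd ℂ) (hortho i j)
    simp only [map_sum, map_mul, MonoidWithZeroHom.map_ite_one_zero] at this
    simpa [Matrix.mul_apply, Matrix.conjTranspose_apply, Matrix.one_apply, mul_comm] using this
  have h2 : (Matrix.of v)ᴴ * (Matrix.of v) = 1 := mul_eq_one_comm.mp hUU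
  intro m k
  have := congrFun (congrFun h2 m) k
  simpa [Matrix.mul_apply, Matrix.conjTranspose_apply, Matrix.one_apply] using this


lemma exp_mulVec_eigen {n : ℕ} (A : Matrix (Fin n) (Fin n) ℂ) (w : Fin n → ℂ) (μ : ℂ)
    (h : A.mulVec w = μ • w) :
    (NormedSpace.exp A).mulVec w = Complex.exp μ • w := by
  letI : SeminormedRing (Matrix (Fin n) (Fin n) ℂ) := Matrix.linftyOpSemiNormedRing
  letI : NormedRing (Matrix (Fin n) (Fin n) ℂ) := Matrix.linftyOpNormedRing
  letI : NormedAlgebra ℂ (Matrix (Fin n) (Fin n) ℂ) := Matrix.linftyOpNormedAlgebra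
  have hpow : ∀ k : ℕ, (A ^ k).mulVec w = (μ ^ k) • w := by
    intro k
    induction k with
    | zero => simp
    | succ k ih =>
      rw [pow_succ, ← Matrix.mulVec_mulVec, h, Matrix.mulVec_smul, ih, smul_smul, pow_succ, mul_comm]
  let L : Matrix (Fin n) (Fin n) ℂ →ₗ[ℂ] (Fin n → ℂ) :=
    { toFun := fun M => M.mulVec w
      map_add' := fun M N => Matrix.add_mulVec M N w
      map_smul' := fun r M => Matrix.smul_mulVec r M w }
  have hL : Continuous L := LinearMap.continuous_of_finiteDimensional L
  have hs : Summable (fun k : ℕ => ((k.factorial : ℂ))⁻¹ • A ^ k) :=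
    NormedSpace.expSeries_summable' (𝕂 := ℂ) A
  have h1 : HasSum (fun k : ℕ => L (((k.factorial : ℂ))⁻¹ • A ^ k)) (L (NormedSpace.exp A)) := by
    rw [NormedSpace.exp_eq_tsum ℂ]
    exact hs.hasSum.map L.toAddMonoidHom hL
  have h2 : HasSum (fun k : ℕ => L (((k.factorial : ℂ))⁻¹ • A ^ k)) (Complex.exp μ • w) := by
    have h3 : HasSum (fun k : ℕ => ((k.factorial : ℂ))⁻¹ • μ ^ k) (Complex.exp μ) := by
      rw [Complex.exp_eq_exp_ℂ, NormedSpace.exp_eq_tsum ℂ]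
      exact (NormedSpace.expSeries_summable' (𝕂 := ℂ) μ).hasSum
    have := h3.smul_const w
    refine this.congr_fun fun k => ?_
    show L (((k.factorial : ℂ))⁻¹ • A ^ k) = (((k.factorial : ℂ))⁻¹ • μ ^ k) • w
    simp only [L, LinearMap.coe_mk, AddHom.coe_mk, Matrix.smul_mulVec, hpow k,
      smul_smul, smul_eq_mul]
  exact h1.unique h2

/-- For an `n × n` Hermitian matrix `H` with simple spectrum,
orthonormal eigenbasis `v 0, …, v (n-1)` and strictly increasing eigenvalues `lam`,
for every unit initial state `ψ0` and every standard basis vector (indexed by `f`),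
the time-averaged probability `(1/T) ∫₀ᵀ |⟨f, e^{-itH} ψ0⟩|² dt` converges, as
`T → ∞`, to `∑ i, |⟨f, v i⟩|² |⟨v i, ψ0⟩|²`. -/
theorem quantum_walk_time_average_tendsto_limiting_distribution
    {n : ℕ} (hn : 1 ≤ n) (H : Matrix (Fin n) (Fin n) ℂ) (hH : H.IsHermitian)
    (lam : Fin n → ℝ) (hlam : StrictMono lam)
    (v : Fin n → (Fin n → ℂ))
    (hortho : ∀ i j, ∑ k, star (v i k) * v j k = if i = j then 1 else 0)
    (heig : ∀ i, H.mulVec (v i) = (lam i : ℂ) • v i)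
    (ψ0 : Fin n → ℂ) (hψ0 : ∑ k, ‖ψ0 k‖ ^ 2 = 1)
    (f : Fin n) :
    Filter.Tendsto
      (fun T : ℝ => (1 / T) * ∫ t in (0:ℝ)..T,
        ‖((NormedSpace.exp ((-(t : ℂ) * Complex.I) • H)).mulVec ψ0) f‖ ^ 2)
      Filter.atTop
      (nhds (∑ i, ‖v i f‖ ^ 2 * ‖∑ k, star (v i k) * ψ0 k‖ ^ 2)) := by
  classical
  set c : Fin n → ℂ := fun i => ∑ k, star (v i k) * ψ0 k with hc
  have hcomp := onb_complete v hortho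
  -- ψ0 in the eigenbasis
  have hpsi : ψ0 = ∑ i, c i • v i := by
    funext k
    have : ψ0 k = ∑ m, (if m = k then (1:ℂ) else 0) * ψ0 m := by simp
    rw [this]
    simp only [Finset.sum_apply, Pi.smul_apply, smul_eq_mul, hc]
    rw [Finset.sum_congr rfl (fun m _ => by rw [← hcomp m k])]
    simp only [Finset.sum_mul]
    rw [Finset.sum_comm]
    refine Finset.sum_congr rfl fun i _ => ?_
    exact Finset.sum_congr rfl fun m _ => by ring
  -- amplitude formula
  have hamp : ∀ t : ℝ, ((NormedSpace.exp ((-(t : ℂ) * Complex.I) • H)).mulVec ψ0) f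
      = ∑ i, c i * Complex.exp (-(t : ℂ) * Complex.I * (lam i)) * v i f := by
    intro t
    have heig' : ∀ i, ((-(t : ℂ) * Complex.I) • H).mulVec (v i)
        = (-(t : ℂ) * Complex.I * (lam i)) • v i := by
      intro i
      rw [Matrix.smul_mulVec, heig i, smul_smul]
    have : (NormedSpace.exp ((-(t : ℂ) * Complex.I) • H)).mulVec ψ0
        = ∑ i, c i • (Complex.exp (-(t : ℂ) * Complex.I * (lam i)) • v i) := by
      rw [hpsi]
      rw [show ∀ M : Matrix (Fin n) (Fin n) ℂ, ∀ x, M.mulVec x = M.mulVecLin x from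
        fun M x => rfl]
      rw [map_sum]
      refine Finset.sum_congr rfl fun i _ => ?_
      rw [map_smul]
      congr 1
      exact exp_mulVec_eigen _ _ _ (heig' i)
    rw [this]
    simp [Finset.sum_apply, mul_assoc]
  -- double-sum representation of the integrand
  set w : Fin n → Fin n → ℂ := fun i j => c i * v i f * (starRingEnd ℂ) (c j * v j f) with hw
  set cc : Fin n → Fin n → ℂ := fun i j => ((lam j - lam i : ℝ) : ℂ) * Complex.I with hccdef
  have hint : ∀ t : ℝ, ‖((NormedSpace.exp ((-(t : ℂ) * Complex.I) • H)).mulVec ψ0) f‖ ^ 2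
      = ∑ i, ∑ j, (w i j * Complex.exp (cc i j * t)).re := by
    intro t
    rw [hamp t]
    set b : Fin n → ℂ := fun i => c i * Complex.exp (-(t:ℂ)*Complex.I*(lam i)) * v i f with hb
    have h1 : ‖∑ i, b i‖ ^ 2 = ((∑ i, b i) * (starRingEnd ℂ) (∑ j, b j)).re := by
      rw [Complex.mul_conj, Complex.ofReal_re, ← Complex.sq_norm]
    rw [h1, map_sum, Finset.sum_mul_sum, Complex.re_sum]
    refine Finset.sum_congr rfl fun i _ => ?_
    rw [Complex.re_sum]
    refine Finset.sum_congr rfl fun j _ => ?_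
    congr 1
    have hconj : (starRingEnd ℂ) (Complex.exp (-(t:ℂ)*Complex.I*(lam j)))
        = Complex.exp ((t:ℂ)*Complex.I*(lam j)) := by
      rw [← Complex.exp_conj]
      congr 1
      simp only [map_mul, map_neg, Complex.conj_I, Complex.conj_ofReal]
      ring
    have hexp : Complex.exp (-(t:ℂ)*Complex.I*(lam i)) * Complex.exp ((t:ℂ)*Complex.I*(lam j))
        = Complex.exp (cc i j * t) := by
      rw [← Complex.exp_add]
      congr 1
      simp only [hccdef]
      push_cast
      ring
    calc b i * (starRingEnd ℂ) (b j)
        = w i j * (Complex.exp (-(t:ℂ)*Complex.I*(lam i))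
            * Complex.exp ((t:ℂ)*Complex.I*(lam j))) := by
          simp only [hb, hw, map_mul, hconj]; ring
      _ = w i j * Complex.exp (cc i j * t) := by rw [hexp]
  set E : Fin n → Fin n → ℝ → ℂ := fun i j T => ∫ t in (0:ℝ)..T, Complex.exp (cc i j * t)
    with hE
  have hcont : ∀ i j, Continuous fun t : ℝ => w i j * Complex.exp (cc i j * t) := by
    intro i j
    fun_prop
  have hIE : ∀ (i j : Fin n) (T : ℝ),
      (∫ t in (0:ℝ)..T, (w i j * Complex.exp (cc i j * t)).re) = (w i j * E i j T).re := by
    intro i j T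
    have hi : IntervalIntegrable (fun t : ℝ => w i j * Complex.exp (cc i j * t))
        MeasureTheory.volume 0 T := (hcont i j).intervalIntegrable 0 T
    have h2 := Complex.reCLM.intervalIntegral_comp_comm hi
    simp only [Complex.reCLM_apply] at h2
    rw [h2, hE]
    rw [intervalIntegral.integral_const_mul]
  have hIntegral : ∀ T : ℝ,
      (∫ t in (0:ℝ)..T, ‖((NormedSpace.exp ((-(t : ℂ) * Complex.I) • H)).mulVec ψ0) f‖ ^ 2)
      = ∑ i, ∑ j, (w i j * E i j T).re := by
    intro T
    rw [intervalIntegral.integral_congr (g := fun t => ∑ i, ∑ j,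
      (w i j * Complex.exp (cc i j * t)).re) (fun t _ => hint t)]
    rw [intervalIntegral.integral_finset_sum (fun i _ =>
      (Continuous.intervalIntegrable (by fun_prop) 0 T))]
    refine Finset.sum_congr rfl fun i _ => ?_
    rw [intervalIntegral.integral_finset_sum (fun j _ =>
      (Continuous.intervalIntegrable (by fun_prop) 0 T))]
    exact Finset.sum_congr rfl fun j _ => hIE i j T
  have hfun : ∀ T : ℝ, ∑ i, ∑ j, ((((1/T : ℝ)) : ℂ) * (w i j * E i j T)).re
      = (1 / T) * ∫ t in (0:ℝ)..T,
          ‖((NormedSpace.exp ((-(t : ℂ) * Complex.I) • H)).mulVec ψ0) f‖ ^ 2 := by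
    intro T
    rw [hIntegral T, Finset.mul_sum]
    refine Finset.sum_congr rfl fun i _ => ?_
    rw [Finset.mul_sum]
    refine Finset.sum_congr rfl fun j _ => ?_
    simp [Complex.mul_re]
  have htarget : (∑ i, ‖v i f‖ ^ 2 * ‖c i‖ ^ 2)
      = ∑ i, ∑ j, (if i = j then (w i j).re else 0) := by
    refine Finset.sum_congr rfl fun i _ => ?_
    rw [Finset.sum_ite_eq Finset.univ i (fun j => (w i j).re), if_pos (Finset.mem_univ i)]
    simp only [hw, Complex.mul_conj]
    simp only [Complex.normSq_eq_norm_sq]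
    rw [Complex.ofReal_re, norm_mul]
    ring
  rw [htarget]
  refine Filter.Tendsto.congr (fun T => hfun T) ?_
  refine tendsto_finset_sum _ fun i _ => ?_
  refine tendsto_finset_sum _ fun j _ => ?_
  by_cases hij : i = j
  · subst hij
    rw [if_pos rfl]
    have hcc0 : cc i i = 0 := by simp [hccdef]
    have hEii : ∀ T : ℝ, E i i T = (T : ℂ) := by
      intro T
      rw [hE]
      simp [hcc0]
    refine Filter.Tendsto.congr' ?_ tendsto_const_nhds
    filter_upwards [eventually_ge_atTop (1:ℝ)] with T hT
    have hT0 : (T : ℝ) ≠ 0 := by linarith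
    rw [hEii T]
    congr 1
    rw [mul_comm (w i i) (T:ℂ), ← mul_assoc]
    rw [show (((1/T : ℝ)) : ℂ) * (T : ℂ) = 1 by
      push_cast
      field_simp
      try exact div_self (Complex.ofReal_ne_zero.mpr hT0)]
    rw [one_mul]
  · rw [if_neg hij]
    have hlamne : lam j - lam i ≠ 0 := by
      refine sub_ne_zero.mpr fun h => hij ?_
      exact (hlam.injective h).symm
    have hccne : cc i j ≠ 0 := by
      simp only [hccdef]
      exact mul_ne_zero (by exact_mod_cast hlamne) Complex.I_ne_zero
    have hEbound : ∀ T : ℝ, ‖E i j T‖ ≤ 2 / ‖cc i j‖ := by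
      intro T
      rw [hE]
      simp only
      rw [integral_exp_mul_complex hccne]
      rw [norm_div]
      have e1 : ‖Complex.exp (cc i j * (T:ℝ)) - Complex.exp (cc i j * (0:ℝ))‖ ≤ 2 := by
        refine (norm_sub_le _ _).trans ?_
        have a1 : ∀ s : ℝ, ‖Complex.exp (cc i j * (s:ℝ))‖ = 1 := by
          intro s
          rw [Complex.norm_exp]
          simp [hccdef, Complex.mul_re, Complex.mul_im]
        rw [a1 T, a1 0]
        norm_num
      have hccpos : (0:ℝ) < ‖cc i j‖ := norm_pos_iff.mpr hccne
      gcongr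
    have hb2 : ∀ᶠ T : ℝ in atTop, ‖((((1/T : ℝ)) : ℂ) * (w i j * E i j T)).re‖
        ≤ (1/T) * (‖w i j‖ * (2 / ‖cc i j‖)) := by
      filter_upwards [eventually_ge_atTop (1:ℝ)] with T hT
      have hT0 : (0:ℝ) < T := by linarith
      calc ‖((((1/T : ℝ)) : ℂ) * (w i j * E i j T)).re‖
          ≤ ‖(((1/T : ℝ)) : ℂ) * (w i j * E i j T)‖ := by
            exact Complex.abs_re_le_norm _
        _ = (1/T) * (‖w i j‖ * ‖E i j T‖) := by
            rw [norm_mul, norm_mul, Complex.norm_real, Real.norm_eq_abs,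
              abs_of_pos (by positivity)]
        _ ≤ (1/T) * (‖w i j‖ * (2 / ‖cc i j‖)) := by
            refine mul_le_mul_of_nonneg_left ?_ (by positivity)
            exact mul_le_mul_of_nonneg_left (hEbound T) (norm_nonneg _)
    have hg : Filter.Tendsto (fun T : ℝ => (1/T) * (‖w i j‖ * (2 / ‖cc i j‖)))
        atTop (nhds 0) := by
      have := tendsto_inv_atTop_zero.mul_const (‖w i j‖ * (2 / ‖cc i j‖))
      simpa [one_div] using this
    exact squeeze_zero_norm' hb2 hg
end

section
/- Let H be an n×n complex Hermitian matrix with simple spectrum, orthonormal eigenbasis v_1, …, v_n and eigenvalues λ_1 < ⋯ < λ_n, let ψ0 ∈ ℂ^n be a unit vector, and let ε > 0. If T ≥ (2/ε) · Σ_{i ≠ l} |⟨v_i, ψ0⟩| · |⟨v_l, ψ0⟩| / |λ_i − λ_l| (sum over ordered pairs i ≠ l), then Σ_f |P_f(T) − P_f(∞)| ≤ ε, the sum over all standard basis vectors f. In particular the ε-quantum-mixing time is at most (2/ε) Σ_{i ≠ l} |⟨v_i, ψ0⟩||⟨v_l, ψ0⟩|/|λ_i − λ_l|. -/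
open scoped BigOperators
open scoped Nat

open NormedSpace in
private lemma qmix_exp_mulVec_eigen {n : ℕ} (A : Matrix (Fin n) (Fin n) ℂ) (x : Fin n → ℂ)
    (μ : ℂ) (h : A.mulVec x = μ • x) :
    (exp A).mulVec x = Complex.exp μ • x := by
  letI : SeminormedRing (Matrix (Fin n) (Fin n) ℂ) := Matrix.linftyOpSemiNormedRing
  letI : NormedRing (Matrix (Fin n) (Fin n) ℂ) := Matrix.linftyOpNormedRing
  letI : NormedAlgebra ℂ (Matrix (Fin n) (Fin n) ℂ) := Matrix.linftyOpNormedAlgebra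
  have hpow : ∀ k : ℕ, (A ^ k).mulVec x = (μ ^ k) • x := by
    intro k; induction k with
    | zero => simp
    | succ k ih =>
      rw [pow_succ', pow_succ', ← Matrix.mulVec_mulVec, ih, Matrix.mulVec_smul, h, smul_smul,
        mul_comm]
  let L0 : Matrix (Fin n) (Fin n) ℂ →ₗ[ℂ] (Fin n → ℂ) :=
    { toFun := fun M => M.mulVec x
      map_add' := fun M N => Matrix.add_mulVec M N x
      map_smul' := fun c M => Matrix.smul_mulVec c M x }
  let L : Matrix (Fin n) (Fin n) ℂ →L[ℂ] (Fin n → ℂ) := L0.toContinuousLinearMap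
  have hs : Summable (fun k : ℕ => ((k ! : ℂ))⁻¹ • A ^ k) := expSeries_summable' A
  have h1 : (exp A).mulVec x = ∑' k : ℕ, ((k ! : ℂ))⁻¹ • (A ^ k).mulVec x := by
    have := L.map_tsum hs
    rw [exp_eq_tsum ℂ]
    simpa [L, L0] using this
  rw [h1]
  have h2 : ∀ k : ℕ, ((k ! : ℂ))⁻¹ • (A ^ k).mulVec x = (((k ! : ℂ))⁻¹ • μ ^ k) • x := by
    intro k; rw [hpow, smul_smul]; rfl
  simp_rw [h2]
  rw [(expSeries_summable' (𝕂 := ℂ) μ).tsum_smul_const, Complex.exp_eq_exp_ℂ, exp_eq_tsum ℂ]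

private lemma qmix_expand {n : ℕ} (hn : 0 < n) (v : Fin n → (Fin n → ℂ))
    (hortho : ∀ i j, ∑ k, star (v i k) * v j k = if i = j then 1 else 0)
    (ψ0 : Fin n → ℂ) :
    ψ0 = ∑ i, (∑ k, star (v i k) * ψ0 k) • v i := by
  classical
  haveI : Nonempty (Fin n) := ⟨⟨0, hn⟩⟩
  have key : ∀ (w : Fin n → ℂ) (d : Fin n → ℂ), w = ∑ i, d i • v i →
      ∀ j, (∑ k, star (v j k) * w k) = d j := by
    intro w d hw j
    rw [hw]
    have : ∀ k, (∑ i, d i • v i) k = ∑ i, d i * v i k := by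
      intro k; simp [Finset.sum_apply]
    simp_rw [this, Finset.mul_sum, mul_left_comm]
    rw [Finset.sum_comm]
    simp_rw [← Finset.mul_sum, hortho]
    simp
  have hli : LinearIndependent ℂ v := by
    rw [linearIndependent_iff']
    intro s g hg i hi
    have hgext : (∑ j, (if j ∈ s then g j else 0) • v j) = 0 := by
      simpa [ite_smul, Finset.sum_ite_mem] using hg
    have := key 0 (fun j => if j ∈ s then g j else 0) hgext.symm i
    simpa [hi] using this.symm
  have hcard : Fintype.card (Fin n) = Module.finrank ℂ (Fin n → ℂ) := by simp
  let b : Module.Basis (Fin n) ℂ (Fin n → ℂ) := basisOfLinearIndependentOfCardEqFinrank hli hcard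
  have hb : ⇑b = v := coe_basisOfLinearIndependentOfCardEqFinrank hli hcard
  have hrepr : ψ0 = ∑ i, b.repr ψ0 i • v i := by
    conv_lhs => rw [← b.sum_repr ψ0]
    rw [hb]
  have hc := key ψ0 (b.repr ψ0) hrepr
  calc ψ0 = ∑ i, b.repr ψ0 i • v i := hrepr
    _ = ∑ i, (∑ k, star (v i k) * ψ0 k) • v i :=
      Finset.sum_congr rfl fun i _ => by rw [hc i]

private lemma qmix_evolution {n : ℕ} (H : Matrix (Fin n) (Fin n) ℂ)
    (lam : Fin n → ℝ) (v : Fin n → (Fin n → ℂ))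
    (heig : ∀ i, H.mulVec (v i) = (lam i : ℂ) • v i)
    (ψ0 : Fin n → ℂ) (c : Fin n → ℂ) (hψc : ψ0 = ∑ i, c i • v i) (t : ℝ) :
    (NormedSpace.exp ((-(t : ℂ) * Complex.I) • H)).mulVec ψ0
      = ∑ i, (Complex.exp (-(t:ℂ) * Complex.I * lam i) * c i) • v i := by
  have hM : ∀ (M : Matrix (Fin n) (Fin n) ℂ),
      M.mulVec (∑ i, c i • v i) = ∑ i, c i • M.mulVec (v i) := by
    intro M
    simp_rw [← Matrix.mulVecLin_apply, map_sum, map_smul]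
  rw [hψc, hM]
  refine Finset.sum_congr rfl fun i _ => ?_
  have hevec : ((-(t : ℂ) * Complex.I) • H).mulVec (v i)
      = (-(t:ℂ) * Complex.I * lam i) • v i := by
    rw [Matrix.smul_mulVec, heig i, smul_smul]
  rw [qmix_exp_mulVec_eigen _ _ _ hevec, smul_smul, mul_comm]

private lemma qmix_normsq {n : ℕ} (lam : Fin n → ℝ) (c : Fin n → ℂ) (w : Fin n → ℂ) (t : ℝ) :
    ‖∑ i, (Complex.exp (-(t:ℂ) * Complex.I * lam i) * c i) * w i‖ ^ 2
      = ∑ i, ∑ l, (Complex.exp ((t:ℂ) * Complex.I * ((lam i - lam l : ℝ) : ℂ))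
          * ((starRingEnd ℂ) (c i) * c l * (starRingEnd ℂ) (w i) * w l)).re := by
  have hz : ∀ z : ℂ, ‖z‖ ^ 2 = ((starRingEnd ℂ) z * z).re := by
    intro z
    rw [Complex.sq_norm, ← Complex.normSq_eq_conj_mul_self]
    simp
  rw [hz, map_sum, Finset.sum_mul_sum, Complex.re_sum]
  refine Finset.sum_congr rfl fun i _ => ?_
  rw [Complex.re_sum]
  refine Finset.sum_congr rfl fun l _ => ?_
  congr 1
  have h1 : (starRingEnd ℂ) (-(t:ℂ) * Complex.I * lam i) = (t:ℂ) * Complex.I * lam i := by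
    simp [Complex.ext_iff]
  have h2 : Complex.exp ((t:ℂ) * Complex.I * lam i) * Complex.exp (-(t:ℂ) * Complex.I * lam l)
      = Complex.exp ((t:ℂ) * Complex.I * ((lam i - lam l : ℝ) : ℂ)) := by
    rw [← Complex.exp_add]
    congr 1
    push_cast
    ring
  rw [show (starRingEnd ℂ) (Complex.exp (-(t:ℂ) * Complex.I * ↑(lam i)) * c i * w i)
        * (Complex.exp (-(t:ℂ) * Complex.I * ↑(lam l)) * c l * w l)
      = (Complex.exp ((t:ℂ) * Complex.I * lam i) * Complex.exp (-(t:ℂ) * Complex.I * lam l))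
        * ((starRingEnd ℂ) (c i) * c l * (starRingEnd ℂ) (w i) * w l) from by
        rw [map_mul, map_mul, ← Complex.exp_conj, h1]; ring, h2]

private lemma qmix_cexp_int_bound (δ : ℝ) (hδ : δ ≠ 0) (T : ℝ) :
    ‖∫ t in (0:ℝ)..T, Complex.exp ((t:ℂ) * Complex.I * δ)‖ ≤ 2 / |δ| := by
  have hc : (Complex.I * δ) ≠ 0 := by
    simp [Complex.I_ne_zero, hδ, Complex.ext_iff]
  have h1 : ∀ t : ℝ, (t:ℂ) * Complex.I * δ = (Complex.I * δ) * t := by intro t; ring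
  simp_rw [h1]
  rw [integral_exp_mul_complex hc]
  have habs : ∀ s : ℝ, ‖Complex.exp (Complex.I * δ * s)‖ = 1 := by
    intro s
    rw [Complex.norm_exp]
    simp [mul_comm]
  rw [norm_div]
  have hnum : ‖Complex.exp (Complex.I * ↑δ * ↑T) - Complex.exp (Complex.I * ↑δ * 0)‖ ≤ 2 := by
    refine (norm_sub_le _ _).trans ?_
    rw [habs T]; simp; norm_num
  have hden : ‖Complex.I * (δ:ℂ)‖ = |δ| := by
    simp
  rw [hden]
  gcongr
  simpa using hnum


/-- For an `n × n` Hermitian matrix `H` with simple spectrum,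
orthonormal eigenbasis `v` and strictly increasing eigenvalues `lam`, a unit initial
state `ψ0` and precision `ε > 0`: if
`T ≥ (2/ε) ⬝ ∑_{i ≠ l} |⟨v i, ψ0⟩| |⟨v l, ψ0⟩| / |lam i − lam l|` (and `T > 0`),
then the time-averaged distribution at time `T` is `ε`-close in total variation to the
limiting distribution; i.e. the `ε`-quantum-mixing time is at most that bound. -/
theorem quantum_mixing_time_upper_bound
    {n : ℕ} (hn : 2 ≤ n) (H : Matrix (Fin n) (Fin n) ℂ) (hH : H.IsHermitian)
    (lam : Fin n → ℝ) (hlam : StrictMono lam)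
    (v : Fin n → (Fin n → ℂ))
    (hortho : ∀ i j, ∑ k, star (v i k) * v j k = if i = j then 1 else 0)
    (heig : ∀ i, H.mulVec (v i) = (lam i : ℂ) • v i)
    (ψ0 : Fin n → ℂ) (hψ0 : ∑ k, ‖ψ0 k‖ ^ 2 = 1)
    (ε : ℝ) (hε : 0 < ε)
    (T : ℝ) (hT0 : 0 < T)
    (hT : (2 / ε) * (∑ i, ∑ l, if i ≠ l then
        ‖∑ k, star (v i k) * ψ0 k‖ * ‖∑ k, star (v l k) * ψ0 k‖ / |lam i - lam l|
      else 0) ≤ T) :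
    ∑ f : Fin n,
      |((1 / T) * ∫ t in (0:ℝ)..T,
          ‖((NormedSpace.exp ((-(t : ℂ) * Complex.I) • H)).mulVec ψ0) f‖ ^ 2)
        - ∑ i, ‖v i f‖ ^ 2 * ‖∑ k, star (v i k) * ψ0 k‖ ^ 2| ≤ ε := by
  classical
  have hn0 : 0 < n := lt_of_lt_of_le two_pos hn
  set c : Fin n → ℂ := fun i => ∑ k, star (v i k) * ψ0 k with hcdef
  have hci : ∀ i, (∑ k, star (v i k) * ψ0 k) = c i := fun i => rfl
  simp only [hci] at hT ⊢
  have hψc : ψ0 = ∑ i, c i • v i := by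
    have := qmix_expand hn0 v hortho ψ0
    simp only [hci] at this
    exact this
  set K : Fin n → Fin n → Fin n → ℂ := fun i l f =>
    (starRingEnd ℂ) (c i) * c l * (starRingEnd ℂ) (v i f) * v l f with hKdef
  set E : Fin n → Fin n → ℂ := fun i l =>
    ∫ t in (0:ℝ)..T, Complex.exp ((t:ℂ) * Complex.I * ((lam i - lam l : ℝ) : ℂ)) with hEdef
  -- pointwise formula
  have hform : ∀ (t : ℝ) (f : Fin n),
      ‖((NormedSpace.exp ((-(t : ℂ) * Complex.I) • H)).mulVec ψ0) f‖ ^ 2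
      = ∑ i, ∑ l, (Complex.exp ((t:ℂ) * Complex.I * ((lam i - lam l : ℝ) : ℂ)) * K i l f).re := by
    intro t f
    have h1 := congrFun (qmix_evolution H lam v heig ψ0 c hψc t) f
    rw [h1, show (∑ i, (Complex.exp (-(t:ℂ) * Complex.I * lam i) * c i) • v i) f
        = ∑ i, (Complex.exp (-(t:ℂ) * Complex.I * lam i) * c i) * v i f from by
        simp [Finset.sum_apply]]
    exact qmix_normsq lam c (fun i => v i f) t
  -- integrability of each term
  have hcont : ∀ i l (f : Fin n), Continuous (fun t : ℝ =>
      Complex.exp ((t:ℂ) * Complex.I * ((lam i - lam l : ℝ) : ℂ)) * K i l f) := by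
    intro i l f
    exact (Complex.continuous_exp.comp
      ((Complex.continuous_ofReal.mul continuous_const).mul continuous_const)).mul
      continuous_const
  -- integral formula
  have hPT : ∀ f : Fin n,
      (∫ t in (0:ℝ)..T,
        ‖((NormedSpace.exp ((-(t : ℂ) * Complex.I) • H)).mulVec ψ0) f‖ ^ 2)
      = ∑ i, ∑ l, (E i l * K i l f).re := by
    intro f
    rw [intervalIntegral.integral_congr (g := fun t => ∑ i, ∑ l,
      (Complex.exp ((t:ℂ) * Complex.I * ((lam i - lam l : ℝ) : ℂ)) * K i l f).re)
      (fun t _ => hform t f)]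
    rw [intervalIntegral.integral_finset_sum]
    · refine Finset.sum_congr rfl fun i _ => ?_
      rw [intervalIntegral.integral_finset_sum]
      · refine Finset.sum_congr rfl fun l _ => ?_
        have hre := Complex.reCLM.intervalIntegral_comp_comm
          ((hcont i l f).intervalIntegrable (μ := MeasureTheory.volume) 0 T)
        have : (∫ t in (0:ℝ)..T,
            Complex.exp ((t:ℂ) * Complex.I * ((lam i - lam l : ℝ) : ℂ)) * K i l f)
            = E i l * K i l f := by
          rw [intervalIntegral.integral_mul_const]
        rw [show (fun t : ℝ =>
            (Complex.exp ((t:ℂ) * Complex.I * ((lam i - lam l : ℝ) : ℂ)) * K i l f).re)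
            = fun t : ℝ => Complex.reCLM
              (Complex.exp ((t:ℂ) * Complex.I * ((lam i - lam l : ℝ) : ℂ)) * K i l f) from rfl]
        rw [hre, this]
        rfl
      · intro l _
        exact (Complex.continuous_re.comp (hcont i l f)).intervalIntegrable 0 T
    · intro i _
      refine Continuous.intervalIntegrable ?_ 0 T
      exact continuous_finset_sum _ fun l _ => Complex.continuous_re.comp (hcont i l f)
  -- diagonal values
  have hEdiag : ∀ i, E i i = (T : ℂ) := by
    intro i
    rw [hEdef]
    simp
  have hKdiag : ∀ i (f : Fin n), K i i f = ((‖v i f‖ ^ 2 * ‖c i‖ ^ 2 : ℝ) : ℂ) := by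
    intro i f
    rw [hKdef]
    have : (starRingEnd ℂ) (c i) * c i * ((starRingEnd ℂ) (v i f) * v i f)
        = ((Complex.normSq (c i) : ℂ)) * ((Complex.normSq (v i f) : ℂ)) := by
      rw [← Complex.normSq_eq_conj_mul_self, ← Complex.normSq_eq_conj_mul_self]
    push_cast
    rw [← mul_assoc] at this
    rw [this]
    simp [Complex.normSq_eq_norm_sq]
    ring
  have hEbound : ∀ i l, i ≠ l → ‖E i l‖ ≤ 2 / |lam i - lam l| := by
    intro i l hil
    have hδ : lam i - lam l ≠ 0 := sub_ne_zero.2 fun h => hil (hlam.injective h)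
    exact qmix_cexp_int_bound _ hδ T
  have hT0' : T ≠ 0 := ne_of_gt hT0
  -- difference formula
  have hdiff : ∀ f : Fin n,
      (1 / T) * (∑ i, ∑ l, (E i l * K i l f).re) - ∑ i, ‖v i f‖ ^ 2 * ‖c i‖ ^ 2
      = ∑ i, ∑ l, if i ≠ l then (1 / T) * (E i l * K i l f).re else 0 := by
    intro f
    rw [Finset.mul_sum, ← Finset.sum_sub_distrib]
    refine Finset.sum_congr rfl fun i _ => ?_
    rw [Finset.mul_sum]
    have hsplit : ∑ l, (1 / T) * (E i l * K i l f).re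
        = (∑ l, if i ≠ l then (1 / T) * (E i l * K i l f).re else 0)
          + (1 / T) * (E i i * K i i f).re := by
      have h1 : (∑ l, if i ≠ l then (1 / T) * (E i l * K i l f).re else 0)
          = ∑ l ∈ Finset.univ.erase i, (1 / T) * (E i l * K i l f).re := by
        rw [← Finset.sum_filter, Finset.filter_ne]
      rw [h1, Finset.sum_erase_add _ _ (Finset.mem_univ i)]
    rw [hsplit]
    have hdiag : (1 / T) * (E i i * K i i f).re = ‖v i f‖ ^ 2 * ‖c i‖ ^ 2 := by
      rw [hEdiag, hKdiag, ← Complex.ofReal_mul, Complex.ofReal_re]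
      field_simp
    rw [hdiag]
    ring
  -- norm of K
  have hK_norm : ∀ i l (f : Fin n),
      ‖K i l f‖ = ‖c i‖ * ‖c l‖ * (‖v i f‖ * ‖v l f‖) := by
    intro i l f
    rw [hKdef]
    simp only [norm_mul, RCLike.norm_conj]
    ring
  -- per-f bound
  have hbf : ∀ f : Fin n,
      |((1 / T) * ∫ t in (0:ℝ)..T,
          ‖((NormedSpace.exp ((-(t : ℂ) * Complex.I) • H)).mulVec ψ0) f‖ ^ 2)
        - ∑ i, ‖v i f‖ ^ 2 * ‖c i‖ ^ 2|
      ≤ ∑ i, ∑ l, if i ≠ l then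
          (2 / T) * (‖c i‖ * ‖c l‖ / |lam i - lam l|) * (‖v i f‖ * ‖v l f‖) else 0 := by
    intro f
    rw [hPT f, hdiff f]
    refine (Finset.abs_sum_le_sum_abs _ _).trans ?_
    refine Finset.sum_le_sum fun i _ => ?_
    refine (Finset.abs_sum_le_sum_abs _ _).trans ?_
    refine Finset.sum_le_sum fun l _ => ?_
    by_cases hil : i = l
    · simp [hil]
    · rw [if_pos hil, if_pos hil]
      have h1 : |(1 / T) * (E i l * K i l f).re| ≤ (1 / T) * (‖E i l‖ * ‖K i l f‖) := by
        rw [abs_mul, abs_of_pos (by positivity : (0:ℝ) < 1 / T)]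
        refine mul_le_mul_of_nonneg_left ?_ (by positivity)
        exact (Complex.abs_re_le_norm _).trans
          (by rw [norm_mul])
      refine h1.trans ?_
      rw [hK_norm]
      calc (1 / T) * (‖E i l‖ * (‖c i‖ * ‖c l‖ * (‖v i f‖ * ‖v l f‖)))
          ≤ (1 / T) * ((2 / |lam i - lam l|) * (‖c i‖ * ‖c l‖ * (‖v i f‖ * ‖v l f‖))) := by
            have hE := hEbound i l hil
            gcongr
        _ = (2 / T) * (‖c i‖ * ‖c l‖ / |lam i - lam l|) * (‖v i f‖ * ‖v l f‖) := by
            ring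
  -- sum the bound over f
  refine (Finset.sum_le_sum fun f _ => hbf f).trans ?_
  have hswap : (∑ f : Fin n, ∑ i, ∑ l, if i ≠ l then
        (2 / T) * (‖c i‖ * ‖c l‖ / |lam i - lam l|) * (‖v i f‖ * ‖v l f‖) else 0)
      = ∑ i, ∑ l, if i ≠ l then
        (2 / T) * (‖c i‖ * ‖c l‖ / |lam i - lam l|) * (∑ f, ‖v i f‖ * ‖v l f‖) else 0 := by
    rw [Finset.sum_comm]
    refine Finset.sum_congr rfl fun i _ => ?_
    rw [Finset.sum_comm]
    refine Finset.sum_congr rfl fun l _ => ?_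
    by_cases hil : i = l
    · simp [hil]
    · rw [if_pos hil]
      simp_rw [if_pos hil]
      rw [← Finset.mul_sum]
  rw [hswap]
  -- column norms are 1
  have hnormz : ∀ z : ℂ, (star z * z).re = ‖z‖ ^ 2 := by
    intro z
    rw [show star z = (starRingEnd ℂ) z from rfl, ← Complex.normSq_eq_conj_mul_self]
    simp [Complex.normSq_eq_norm_sq, ← Complex.ofReal_pow]
  have hnorm1 : ∀ i, ∑ f, ‖v i f‖ ^ 2 = 1 := by
    intro i
    have h := congrArg Complex.re (hortho i i)
    rw [Complex.re_sum] at h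
    simp_rw [hnormz] at h
    simpa using h
  have hCS : ∀ i l, ∑ f, ‖v i f‖ * ‖v l f‖ ≤ 1 := by
    intro i l
    have h := Finset.sum_mul_sq_le_sq_mul_sq Finset.univ (fun f => ‖v i f‖) (fun f => ‖v l f‖)
    rw [hnorm1 i, hnorm1 l, one_mul] at h
    have h0 : (0:ℝ) ≤ ∑ f, ‖v i f‖ * ‖v l f‖ :=
      Finset.sum_nonneg fun f _ => mul_nonneg (norm_nonneg _) (norm_nonneg _)
    nlinarith
  have hstep : (∑ i, ∑ l, if i ≠ l then
        (2 / T) * (‖c i‖ * ‖c l‖ / |lam i - lam l|) * (∑ f, ‖v i f‖ * ‖v l f‖) else 0)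
      ≤ ∑ i, ∑ l, if i ≠ l then (2 / T) * (‖c i‖ * ‖c l‖ / |lam i - lam l|) else 0 := by
    refine Finset.sum_le_sum fun i _ => Finset.sum_le_sum fun l _ => ?_
    by_cases hil : i = l
    · simp [hil]
    · rw [if_pos hil, if_pos hil]
      exact mul_le_of_le_one_right (by positivity) (hCS i l)
  refine hstep.trans ?_
  have hfact : (∑ i, ∑ l, if i ≠ l then (2 / T) * (‖c i‖ * ‖c l‖ / |lam i - lam l|) else 0)
      = (2 / T) * ∑ i, ∑ l, if i ≠ l then ‖c i‖ * ‖c l‖ / |lam i - lam l| else 0 := by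
    simp_rw [Finset.mul_sum, mul_ite, mul_zero]
  rw [hfact]
  set S : ℝ := ∑ i, ∑ l, if i ≠ l then ‖c i‖ * ‖c l‖ / |lam i - lam l| else 0 with hSdef
  have hS0 : 0 ≤ S := by
    rw [hSdef]
    refine Finset.sum_nonneg fun i _ => Finset.sum_nonneg fun l _ => ?_
    by_cases hil : i = l
    · simp [hil]
    · rw [if_pos hil]; positivity
  rw [div_mul_eq_mul_div, div_le_iff₀ hT0]
  have h2 : ε * ((2 / ε) * S) ≤ ε * T := mul_le_mul_of_nonneg_left hT hε.le
  have h3 : ε * ((2 / ε) * S) = 2 * S := by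
    field_simp
  rw [h3] at h2
  linarith
end

section
/- Let A be an n×n real symmetric matrix, let s ∈ ℝ^n be the unit vector with all entries equal to 1/√n, and let δ = ‖A − s sᵀ‖ be the operator norm of A − s sᵀ. Let λ_max be the largest eigenvalue of A and let v be a unit eigenvector of A for λ_max. Then ⟨v, s⟩² ≥ λ_max − δ, and consequently |⟨v, s⟩| ≥ 1 − 2δ. -/
open scoped BigOperators
open scoped RealInnerProductSpace

lemma rayleigh_aux {n : ℕ} (A : Matrix (Fin n) (Fin n) ℝ) (hA : A.IsHermitian) (lammax : ℝ)
    (hub : ∀ μ : ℝ, (∃ w : Fin n → ℝ, w ≠ 0 ∧ A.mulVec w = μ • w) → μ ≤ lammax)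
    (x : EuclideanSpace ℝ (Fin n)) :
    ⟪x, Matrix.toEuclideanLin A x⟫ ≤ lammax * ‖x‖ ^ 2 := by
  set b := hA.eigenvectorBasis with hb
  have hT : ∀ i, Matrix.toEuclideanLin A (b i) = hA.eigenvalues i • b i := by
    intro i
    have h := hA.mulVec_eigenvectorBasis i
    ext k
    simpa using congrFun h k
  have hμ : ∀ i, hA.eigenvalues i ≤ lammax := by
    intro i
    refine hub _ ⟨b i, ?_, hA.mulVec_eigenvectorBasis i⟩
    intro h0
    have : (b i : EuclideanSpace ℝ (Fin n)) = 0 := by ext k; exact congrFun h0 k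
    have h1 := b.orthonormal.1 i
    rw [this] at h1
    simp at h1
  have hxx : x = ∑ i, ⟪b i, x⟫ • b i := (b.sum_repr' x).symm
  have hTx : Matrix.toEuclideanLin A x = ∑ i, (hA.eigenvalues i * ⟪b i, x⟫) • b i := by
    conv_lhs => rw [hxx]
    rw [map_sum]
    refine Finset.sum_congr rfl fun i _ => ?_
    rw [map_smul, hT i, smul_smul, mul_comm]
  have hinner : ⟪x, Matrix.toEuclideanLin A x⟫ = ∑ i, hA.eigenvalues i * ⟪b i, x⟫ ^ 2 := by
    rw [hTx, inner_sum]
    refine Finset.sum_congr rfl fun i _ => ?_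
    rw [real_inner_smul_right, real_inner_comm]
    ring
  have hnorm : ‖x‖ ^ 2 = ∑ i, ⟪b i, x⟫ ^ 2 := by
    rw [← real_inner_self_eq_norm_sq, ← b.sum_inner_mul_inner x x]
    refine Finset.sum_congr rfl fun i _ => ?_
    rw [real_inner_comm]; ring
  rw [hinner, hnorm, Finset.mul_sum]
  exact Finset.sum_le_sum fun i _ => mul_le_mul_of_nonneg_right (hμ i) (sq_nonneg _)

/-- Let `A` be an `n × n` real symmetric matrix, `s` the uniform unit
vector with entries `1/√n`, and `δ = ‖A − s sᵀ‖` the operator (spectral) norm of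
`A − s sᵀ`. If `lammax` is the largest eigenvalue of `A` and `v` a unit eigenvector of
`A` for `lammax`, then `⟨v, s⟩² ≥ lammax − δ` and consequently `|⟨v, s⟩| ≥ 1 − 2δ`. -/
theorem top_eigenvector_overlap_with_uniform
    {n : ℕ} (hn : 1 ≤ n) (A : Matrix (Fin n) (Fin n) ℝ) (hA : A.IsSymm)
    (s : Fin n → ℝ) (hs : s = fun _ => 1 / Real.sqrt n)
    (δ : ℝ)
    (hδ : δ = ‖LinearMap.toContinuousLinearMap
        (Matrix.toEuclideanLin (A - Matrix.vecMulVec s s))‖)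
    (lammax : ℝ)
    (hmax : IsGreatest {μ : ℝ | ∃ w : Fin n → ℝ, w ≠ 0 ∧ A.mulVec w = μ • w} lammax)
    (v : Fin n → ℝ) (hv : ∑ k, v k ^ 2 = 1) (hev : A.mulVec v = lammax • v) :
    lammax - δ ≤ (∑ k, v k * s k) ^ 2 ∧ 1 - 2 * δ ≤ |∑ k, v k * s k| := by
  have hA' : A.IsHermitian := by
    rw [Matrix.IsHermitian, Matrix.conjTranspose_eq_transpose_of_trivial]; exact hA
  set E := EuclideanSpace ℝ (Fin n)
  set e : (Fin n → ℝ) ≃ E := (WithLp.equiv 2 (Fin n → ℝ)).symm with he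
  have hip : ∀ x y : Fin n → ℝ, ⟪e x, e y⟫ = ∑ k, x k * y k := by
    intro x y
    rw [show e x = (WithLp.equiv 2 _).symm x from rfl, show e y = (WithLp.equiv 2 _).symm y from rfl,
      WithLp.equiv_symm_apply, EuclideanSpace.inner_toLp_toLp]
    simp [dotProduct, mul_comm]
  -- norms
  have hnpos : (0:ℝ) < n := by exact_mod_cast hn
  have hss : ∑ k, s k * s k = 1 := by
    subst hs
    simp only [Finset.sum_const, Finset.card_univ, Fintype.card_fin, nsmul_eq_mul]
    rw [div_mul_div_comm, one_mul, Real.mul_self_sqrt hnpos.le]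
    field_simp
  have hnv : ‖e v‖ ^ 2 = 1 := by
    rw [← real_inner_self_eq_norm_sq, hip]
    simpa [sq] using hv
  have hns : ‖e s‖ ^ 2 = 1 := by
    rw [← real_inner_self_eq_norm_sq, hip, hss]
  -- matrix action facts
  have hact : ∀ (M : Matrix (Fin n) (Fin n) ℝ) (x : Fin n → ℝ),
      Matrix.toEuclideanLin M (e x) = e (M.mulVec x) := fun M x => rfl
  have hPmul : ∀ x : Fin n → ℝ,
      (Matrix.vecMulVec s s).mulVec x = (∑ k, s k * x k) • s := by
    intro x
    ext i
    simp only [Matrix.mulVec, Matrix.vecMulVec_apply, dotProduct, Pi.smul_apply,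
      smul_eq_mul, Finset.sum_mul]
    exact Finset.sum_congr rfl fun j _ => by ring
  have hesmul : ∀ (c : ℝ) (x : Fin n → ℝ), e (c • x) = c • e x := fun c x => rfl
  set T := LinearMap.toContinuousLinearMap
      (Matrix.toEuclideanLin (A - Matrix.vecMulVec s s)) with hT
  have hTapp : ∀ x : Fin n → ℝ,
      ⟪e x, T (e x)⟫ = ⟪e x, Matrix.toEuclideanLin A (e x)⟫ - (∑ k, s k * x k) ^ 2 := by
    intro x
    have : T (e x) = Matrix.toEuclideanLin A (e x) - (∑ k, s k * x k) • e s := by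
      show Matrix.toEuclideanLin (A - Matrix.vecMulVec s s) (e x) = _
      rw [map_sub, LinearMap.sub_apply, hact A, hact (Matrix.vecMulVec s s), hPmul, hesmul]
    rw [this, inner_sub_right, real_inner_smul_right, hip]
    have hc : ∑ k, x k * s k = ∑ k, s k * x k := Finset.sum_congr rfl fun k _ => mul_comm _ _
    rw [hc]
    ring
  have hbound : ∀ x : Fin n → ℝ, |⟪e x, T (e x)⟫| ≤ δ * ‖e x‖ ^ 2 := by
    intro x
    calc |⟪e x, T (e x)⟫| ≤ ‖e x‖ * ‖T (e x)‖ := abs_real_inner_le_norm _ _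
      _ ≤ ‖e x‖ * (‖T‖ * ‖e x‖) :=
        mul_le_mul_of_nonneg_left (T.le_opNorm _) (norm_nonneg _)
      _ = δ * ‖e x‖ ^ 2 := by rw [hδ]; ring
  -- evaluate at v
  have hAv : ⟪e v, Matrix.toEuclideanLin A (e v)⟫ = lammax := by
    rw [hact, hev, hesmul, real_inner_smul_right, hip]
    simp only [← sq, hv, mul_one]
  have hvs : ∑ k, s k * v k = ∑ k, v k * s k := by
    exact Finset.sum_congr rfl fun k _ => mul_comm _ _
  have key1 : lammax - δ ≤ (∑ k, v k * s k) ^ 2 := by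
    have h := hbound v
    rw [hTapp v, hAv, hvs, hnv, mul_one] at h
    have := abs_le.mp h
    linarith [this.1]
  refine ⟨key1, ?_⟩
  -- Rayleigh at s : lammax ≥ 1 - δ
  have hray : ⟪e s, Matrix.toEuclideanLin A (e s)⟫ ≤ lammax := by
    have := rayleigh_aux A hA' lammax (fun μ hμ => hmax.2 hμ) (e s)
    rwa [hns, mul_one] at this
  have hlam : 1 - δ ≤ lammax := by
    have h := hbound s
    rw [hTapp s, hss, one_pow, hns, mul_one] at h
    have := abs_le.mp h
    linarith [this.2]
  -- |c| ≥ c² since |c| ≤ 1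
  have hcs : |∑ k, v k * s k| ≤ 1 := by
    have h := abs_real_inner_le_norm (e v) (e s)
    rw [hip] at h
    have h1 : ‖e v‖ = 1 := by nlinarith [norm_nonneg (e v)]
    have h2 : ‖e s‖ = 1 := by nlinarith [norm_nonneg (e s)]
    rw [h1, h2, mul_one] at h
    exact h
  have hsq : (∑ k, v k * s k) ^ 2 ≤ |∑ k, v k * s k| := by
    calc (∑ k, v k * s k) ^ 2 = |∑ k, v k * s k| ^ 2 := (sq_abs _).symm
      _ ≤ |∑ k, v k * s k| := by nlinarith [abs_nonneg (∑ k, v k * s k)]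
  linarith
end

section
/- Let n ≥ 2, let A be an n×n real symmetric matrix, let s ∈ ℝ^n be the unit vector with all entries 1/√n, and let δ = ‖A − s sᵀ‖. Let λ_{n−1} denote the second largest eigenvalue of A (with multiplicity) and let v be a unit eigenvector of A for its largest eigenvalue. Then λ_{n−1} ≤ δ + (1 − ⟨v, s⟩²), and consequently λ_{n−1} ≤ 5δ. -/
open scoped BigOperators
open Matrix

lemma rayleigh_abs_le {n : ℕ} (M : Matrix (Fin n) (Fin n) ℝ) (x : Fin n → ℝ) :
    |x ⬝ᵥ M.mulVec x| ≤ ‖LinearMap.toContinuousLinearMap (Matrix.toEuclideanLin M)‖ * (x ⬝ᵥ x) := by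
  set T := LinearMap.toContinuousLinearMap (Matrix.toEuclideanLin M)
  set y : EuclideanSpace ℝ (Fin n) := (WithLp.equiv 2 _).symm x with hy
  have h1 : (inner ℝ y (T y) : ℝ) = x ⬝ᵥ M.mulVec x := by
    simp [T, hy, dotProduct, EuclideanSpace.inner_toLp_toLp, mul_comm]
  have h2 : (inner ℝ y y : ℝ) = x ⬝ᵥ x := by
    exact EuclideanSpace.inner_toLp_toLp x x
  have h3 : ‖y‖ ^ 2 = x ⬝ᵥ x := by rw [← h2, real_inner_self_eq_norm_sq]
  calc |x ⬝ᵥ M.mulVec x| = |(inner ℝ y (T y) : ℝ)| := by rw [h1]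
    _ ≤ ‖y‖ * ‖T y‖ := abs_real_inner_le_norm _ _
    _ ≤ ‖y‖ * (‖T‖ * ‖y‖) := mul_le_mul_of_nonneg_left (T.le_opNorm y) (norm_nonneg y)
    _ = ‖T‖ * ‖y‖ ^ 2 := by ring
    _ = ‖T‖ * (x ⬝ᵥ x) := by rw [h3]

set_option maxHeartbeats 2000000 in
/-- Let `n ≥ 2`, `A` an `n × n` real symmetric matrix, `s` the uniform
unit vector with entries `1/√n`, and `δ = ‖A − s sᵀ‖`. If `lam` lists the eigenvalues of
`A` in nondecreasing order with multiplicity (via an orthonormal eigenbasis `w`), and `v`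
is a unit eigenvector of `A` for the largest eigenvalue `lam (n-1)`, then the second
largest eigenvalue satisfies `lam (n-2) ≤ δ + (1 − ⟨v, s⟩²)` and hence `lam (n-2) ≤ 5δ`. -/
theorem second_largest_eigenvalue_bound
    {n : ℕ} (hn : 2 ≤ n) (A : Matrix (Fin n) (Fin n) ℝ) (hA : A.IsSymm)
    (s : Fin n → ℝ) (hs : s = fun _ => 1 / Real.sqrt n)
    (δ : ℝ)
    (hδ : δ = ‖LinearMap.toContinuousLinearMap
        (Matrix.toEuclideanLin (A - Matrix.vecMulVec s s))‖)
    (lam : Fin n → ℝ) (hmono : Monotone lam)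
    (w : Fin n → (Fin n → ℝ))
    (hortho : ∀ i j, ∑ k, w i k * w j k = if i = j then 1 else 0)
    (heig : ∀ i, A.mulVec (w i) = lam i • w i)
    (v : Fin n → ℝ) (hv : ∑ k, v k ^ 2 = 1)
    (hev : A.mulVec v = lam ⟨n - 1, by omega⟩ • v) :
    lam ⟨n - 2, by omega⟩ ≤ δ + (1 - (∑ k, v k * s k) ^ 2) ∧
      lam ⟨n - 2, by omega⟩ ≤ 5 * δ := by
  have hnR : (0:ℝ) < n := by exact_mod_cast (by omega : 0 < n)
  set a : Fin n := ⟨n - 2, by omega⟩ with ha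
  set b : Fin n := ⟨n - 1, by omega⟩ with hb
  have hab : a ≠ b := by simp only [ha, hb, ne_eq, Fin.mk.injEq]; omega
  have hδ0 : 0 ≤ δ := hδ ▸ norm_nonneg _
  -- s is a unit vector
  have hss : s ⬝ᵥ s = 1 := by
    subst hs
    simp only [dotProduct, Finset.sum_const, Finset.card_univ, Fintype.card_fin,
      nsmul_eq_mul]
    rw [div_mul_div_comm, one_mul, Real.mul_self_sqrt (le_of_lt hnR)]
    field_simp
  have hvv : v ⬝ᵥ v = 1 := by
    simpa [dotProduct, sq] using hv
  -- Rayleigh quotient bound from the operator norm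
  have hray : ∀ x : Fin n → ℝ, |x ⬝ᵥ A.mulVec x - (x ⬝ᵥ s) ^ 2| ≤ δ * (x ⬝ᵥ x) := by
    intro x
    have h1 := rayleigh_abs_le (A - Matrix.vecMulVec s s) x
    rw [← hδ] at h1
    have h2 : x ⬝ᵥ (A - Matrix.vecMulVec s s).mulVec x = x ⬝ᵥ A.mulVec x - (x ⬝ᵥ s) ^ 2 := by
      rw [Matrix.sub_mulVec, dotProduct_sub]
      congr 1
      have : (Matrix.vecMulVec s s).mulVec x = (s ⬝ᵥ x) • s := by
        ext i
        simp [Matrix.mulVec, Matrix.vecMulVec_apply, dotProduct, Finset.mul_sum, mul_comm,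
          mul_left_comm]
      rw [this, dotProduct_smul, dotProduct_comm s x, smul_eq_mul, sq]
    rwa [h2] at h1
  -- the orthogonal matrix W of eigenvectors
  set W : Matrix (Fin n) (Fin n) ℝ := Matrix.of w with hW
  have hWWT : W * Wᵀ = 1 := by
    ext i j
    simp only [Matrix.mul_apply, Matrix.transpose_apply, Matrix.one_apply, hW, Matrix.of_apply]
    exact hortho i j
  have hWTW : Wᵀ * W = 1 := mul_eq_one_comm.mp hWWT
  have hAW : A * Wᵀ = Wᵀ * Matrix.diagonal lam := by
    ext i j
    rw [Matrix.mul_diagonal]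
    have h1 := congrFun (heig j) i
    simp only [Matrix.mulVec, dotProduct, Pi.smul_apply, smul_eq_mul] at h1
    simp only [Matrix.mul_apply, Matrix.transpose_apply, hW, Matrix.of_apply]
    rw [h1]; ring
  have hAeq : A = Wᵀ * Matrix.diagonal lam * W := by
    calc A = A * (Wᵀ * W) := by rw [hWTW, Matrix.mul_one]
      _ = (A * Wᵀ) * W := by rw [Matrix.mul_assoc]
      _ = Wᵀ * Matrix.diagonal lam * W := by rw [hAW]
  -- quadratic form in eigencoordinates
  have hquad : ∀ x : Fin n → ℝ, x ⬝ᵥ A.mulVec x = ∑ i, lam i * (W.mulVec x i) ^ 2 := by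
    intro x
    rw [hAeq, ← Matrix.mulVec_mulVec, ← Matrix.mulVec_mulVec, Matrix.dotProduct_mulVec,
      Matrix.vecMul_transpose]
    simp only [dotProduct, Matrix.mulVec_diagonal]
    exact Finset.sum_congr rfl fun i _ => by ring
  have hnormW : ∀ x : Fin n → ℝ, ∑ i, (W.mulVec x i) ^ 2 = x ⬝ᵥ x := by
    intro x
    have : x ⬝ᵥ (Wᵀ * W).mulVec x = x ⬝ᵥ x := by rw [hWTW, Matrix.one_mulVec]
    rw [← Matrix.mulVec_mulVec, Matrix.dotProduct_mulVec, Matrix.vecMul_transpose] at this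
    rw [← this]
    simp only [dotProduct]
    exact Finset.sum_congr rfl fun i _ => by ring
  -- largest eigenvalue dominates the Rayleigh quotient of s
  have hlam_le : ∀ i : Fin n, lam i ≤ lam b := fun i =>
    hmono (by rw [Fin.le_def]; simp only [hb]; omega)
  have hsAs_le : s ⬝ᵥ A.mulVec s ≤ lam b := by
    rw [hquad s]
    calc ∑ i, lam i * (W.mulVec s i) ^ 2 ≤ ∑ i, lam b * (W.mulVec s i) ^ 2 :=
          Finset.sum_le_sum fun i _ => mul_le_mul_of_nonneg_right (hlam_le i) (sq_nonneg _)
      _ = lam b * ∑ i, (W.mulVec s i) ^ 2 := by rw [Finset.mul_sum]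
      _ = lam b := by rw [hnormW s, hss, mul_one]
  -- lam b ≥ 1 - δ
  have hrs := hray s
  rw [hss, mul_one, one_pow] at hrs
  have hlamb_ge : 1 - δ ≤ lam b := by
    have := abs_le.mp hrs
    linarith [this.1, this.2]
  -- Rayleigh at v : lam b - γ² bounded
  set γ : ℝ := ∑ k, v k * s k with hγ
  have hγs : v ⬝ᵥ s = γ := rfl
  have hvAv : v ⬝ᵥ A.mulVec v = lam b := by
    rw [hev, dotProduct_smul, smul_eq_mul, hvv, mul_one]
  have hrv := hray v
  rw [hvAv, hvv, mul_one, hγs] at hrv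
  have hγ2_ge : 1 - 2 * δ ≤ γ ^ 2 := by
    have := abs_le.mp hrv
    linarith [this.1, this.2, hlamb_ge]
  -- construct u in span {w a, w b} orthogonal to v
  set p : ℝ := w a ⬝ᵥ v with hp
  set q : ℝ := w b ⬝ᵥ v with hq
  obtain ⟨α, β, hαβ1, hαβ2⟩ : ∃ α β : ℝ, α ^ 2 + β ^ 2 = 1 ∧ α * p + β * q = 0 := by
    by_cases h : p = 0 ∧ q = 0
    · exact ⟨1, 0, by norm_num, by rw [h.1, h.2]; ring⟩
    · have hr0 : p ^ 2 + q ^ 2 ≠ 0 := by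
        intro h0
        exact h ⟨by nlinarith [sq_nonneg p, sq_nonneg q], by nlinarith [sq_nonneg p, sq_nonneg q]⟩
      have hrpos : 0 < p ^ 2 + q ^ 2 := lt_of_le_of_ne (by positivity) (Ne.symm hr0)
      set r := Real.sqrt (p ^ 2 + q ^ 2) with hrr
      have hr : r ^ 2 = p ^ 2 + q ^ 2 := Real.sq_sqrt (le_of_lt hrpos)
      have hrne : r ≠ 0 := by
        intro h0; rw [h0] at hr; simp at hr; exact hr0 hr.symm
      exact ⟨q / r, -p / r, by field_simp; linarith [hr], by field_simp; ring⟩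
  set u : Fin n → ℝ := α • w a + β • w b with hu
  have haa : w a ⬝ᵥ w a = 1 := by simpa [dotProduct] using hortho a a
  have hbb : w b ⬝ᵥ w b = 1 := by simpa [dotProduct] using hortho b b
  have habd : w a ⬝ᵥ w b = 0 := by simpa [hab, dotProduct] using hortho a b
  have hbad : w b ⬝ᵥ w a = 0 := by simpa [Ne.symm hab, dotProduct] using hortho b a
  have huu : u ⬝ᵥ u = 1 := by
    simp only [hu, dotProduct_add, add_dotProduct, dotProduct_smul,
      smul_dotProduct, smul_eq_mul, haa, hbb, habd, hbad]
    nlinarith [hαβ1]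
  have huv : u ⬝ᵥ v = 0 := by
    simp only [hu, add_dotProduct, smul_dotProduct, smul_eq_mul, ← hp, ← hq]
    exact hαβ2
  have hAu : A.mulVec u = (α * lam a) • w a + (β * lam b) • w b := by
    rw [hu, Matrix.mulVec_add, Matrix.mulVec_smul, Matrix.mulVec_smul, heig a, heig b,
      smul_smul, smul_smul]
  have huAu : u ⬝ᵥ A.mulVec u = α ^ 2 * lam a + β ^ 2 * lam b := by
    rw [hAu]
    simp only [hu, dotProduct_add, add_dotProduct, dotProduct_smul,
      smul_dotProduct, smul_eq_mul, haa, hbb, habd, hbad]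
    ring
  have hlam_ab : lam a ≤ lam b := hmono (by rw [Fin.le_def]; simp only [ha, hb]; omega)
  have hlamA : lam a ≤ u ⬝ᵥ A.mulVec u := by
    rw [huAu]; nlinarith [sq_nonneg β, hαβ1, hlam_ab]
  -- Rayleigh at u
  set t : ℝ := u ⬝ᵥ s with ht
  have hru := hray u
  rw [huu, mul_one, ← ht] at hru
  have hmain : lam a ≤ δ + t ^ 2 := by
    have := abs_le.mp hru
    linarith [this.2, hlamA]
  -- Bessel: t² + γ² ≤ 1
  have hbessel : t ^ 2 + γ ^ 2 ≤ 1 := by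
    set z : Fin n → ℝ := s - t • u - γ • v with hz
    have hz0 : 0 ≤ z ⬝ᵥ z := by
      simp only [dotProduct]
      exact Finset.sum_nonneg fun i _ => mul_self_nonneg _
    have hsu : s ⬝ᵥ u = t := (dotProduct_comm s u).trans ht.symm
    have hsv : s ⬝ᵥ v = γ := (dotProduct_comm s v).trans hγs
    have hvu : v ⬝ᵥ u = 0 := (dotProduct_comm v u).trans huv
    have hvs : v ⬝ᵥ s = γ := hγs
    have hus : u ⬝ᵥ s = t := ht.symm
    have hzz : z ⬝ᵥ z = 1 - t ^ 2 - γ ^ 2 := by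
      simp only [hz, dotProduct_sub, sub_dotProduct, dotProduct_smul,
        smul_dotProduct, smul_eq_mul, hss, hvv, huu, hsu, hsv, hvu, hvs, hus, huv]
      ring
    linarith [hz0, hzz ▸ hz0]
  refine ⟨by linarith [hmain, hbessel], by linarith [hmain, hbessel, hγ2_ge]⟩
end

section
/- There exists an absolute constant K > 0 with the following property. Let (Ω, P) be a probability space, let n ≥ 16 be an integer, let a > 0 and C ≥ 1 be reals, and let δ_1, …, δ_{n−1} : Ω → (0, ∞) be random variables such that for every i ∈ {1, …, n−1} and every δ ∈ (0, 1], P(δ_i ≤ δ·a) ≤ C·δ·log n. Then P( Σ_{i=1}^{n−1} 1/δ_i > K·C·n·(log n)^5 / a ) ≤ K·C / log n. -/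
set_option maxHeartbeats 1000000

open scoped BigOperators
open Finset MeasureTheory

lemma dyadic_bound (a x : ℝ) (ha : 0 < a) (hx : 0 < x) (L : ℕ) :
    min (1/x) (2^(L+1)/a) ≤ 1/a + ∑ k ∈ Finset.range (L+1),
      (if x ≤ a / 2^k then 2^(k+1)/a else 0) := by
  have hterm_nonneg : ∀ k ∈ Finset.range (L+1),
      (0:ℝ) ≤ (if x ≤ a / 2^k then 2^(k+1)/a else 0) := by
    intro k _
    split_ifs with h
    · positivity
    · exact le_rfl
  have hsum_nonneg : (0:ℝ) ≤ ∑ k ∈ Finset.range (L+1),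
      (if x ≤ a / 2^k then 2^(k+1)/a else 0) := Finset.sum_nonneg hterm_nonneg
  by_cases hxa : a < x
  · have h1 : 1/x ≤ 1/a := one_div_le_one_div_of_le ha hxa.le
    calc min (1/x) (2^(L+1)/a) ≤ 1/x := min_le_left _ _
      _ ≤ 1/a := h1
      _ ≤ _ := le_add_of_nonneg_right hsum_nonneg
  · push_neg at hxa
    classical
    set Q : ℕ → Prop := fun k => x ≤ a / 2^k with hQ
    have hQ0 : Q 0 := by simpa [hQ] using hxa
    set k := Nat.findGreatest Q L with hk
    have hkL : k ≤ L := Nat.findGreatest_le L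
    have hQk : Q k := Nat.findGreatest_spec (Nat.zero_le L) hQ0
    have hsingle : (2:ℝ)^(k+1)/a ≤ ∑ j ∈ Finset.range (L+1),
        (if x ≤ a / 2^j then 2^(j+1)/a else 0) := by
      have := Finset.single_le_sum hterm_nonneg
        (Finset.mem_range.mpr (Nat.lt_succ_of_le hkL))
      rw [if_pos (show x ≤ a / 2^k from hQk)] at this
      exact this
    have hmain : min (1/x) (2^(L+1)/a) ≤ (2:ℝ)^(k+1)/a := by
      rcases hkL.lt_or_eq with hlt | heq
      · have hnQ : ¬ Q (k+1) :=
          Nat.findGreatest_is_greatest (Nat.lt_succ_self k) hlt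
        have hxgt : a / 2^(k+1) < x := lt_of_not_ge hnQ
        have : 1/x ≤ 2^(k+1)/a := by
          rw [div_le_div_iff₀ hx ha]
          have := (div_lt_iff₀ (by positivity : (0:ℝ) < 2^(k+1))).mp hxgt
          nlinarith
        exact le_trans (min_le_left _ _) this
      · rw [heq]
        exact min_le_right _ _
    calc min (1/x) (2^(L+1)/a) ≤ (2:ℝ)^(k+1)/a := hmain
      _ ≤ _ := hsingle
      _ ≤ _ := le_add_of_nonneg_left (by positivity)

/-- There is an absolute constant `K > 0` such that: for every
probability space `(Ω, P)`, every `n ≥ 16`, reals `a > 0` and `C ≥ 1`, and positive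
random variables `δ 0, …, δ (n-2)` (the consecutive eigenvalue gaps) satisfying the
level-repulsion tail bound `P(δ i ≤ d⬝a) ≤ C d log n` for all `d ∈ (0,1]`, one has
`P(∑ i, 1/δ i > K C n (log n)^5 / a) ≤ K C / log n`. -/
theorem sum_inverse_gaps_tail_bound :
    ∃ K : ℝ, 0 < K ∧
      ∀ (Ω : Type) (_ : MeasurableSpace Ω) (P : MeasureTheory.Measure Ω),
        MeasureTheory.IsProbabilityMeasure P →
        ∀ n : ℕ, 16 ≤ n → ∀ a C : ℝ, 0 < a → 1 ≤ C →
        ∀ δ : Fin (n - 1) → Ω → ℝ,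
          (∀ i, Measurable (δ i)) →
          (∀ i ω, 0 < δ i ω) →
          (∀ i, ∀ d : ℝ, 0 < d → d ≤ 1 →
            P {ω | δ i ω ≤ d * a} ≤ ENNReal.ofReal (C * d * Real.log n)) →
          P {ω | K * C * n * Real.log n ^ 5 / a < ∑ i, 1 / δ i ω}
            ≤ ENNReal.ofReal (K * C / Real.log n) := by
  classical
  refine ⟨16, by norm_num, ?_⟩
  intro Ω mΩ P hP n hn a C ha hC δ hmeas hpos htail
  set ln : ℝ := Real.log n with hln_def
  have hn16 : (16:ℝ) ≤ (n:ℝ) := by exact_mod_cast hn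
  have hn0 : (0:ℝ) < n := by linarith
  have hC0 : (0:ℝ) < C := lt_of_lt_of_le one_pos hC
  -- lower bound on log n
  have hlog2 : (0.6931471803:ℝ) < Real.log 2 := Real.log_two_gt_d9
  have hln_lb : (2.772:ℝ) ≤ ln := by
    have h1 : Real.log 16 ≤ ln := Real.log_le_log (by norm_num) hn16
    have h2 : Real.log 16 = 4 * Real.log 2 := by
      rw [show (16:ℝ) = 2^(4:ℕ) by norm_num, Real.log_pow]
      push_cast; ring
    linarith
  have hln_pos : (0:ℝ) < ln := by linarith
  have hln1 : (1:ℝ) ≤ ln := by linarith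
  have hlnn : ln ≤ (n:ℝ) := by
    have := Real.log_le_sub_one_of_pos hn0
    linarith
  -- the dyadic depth L
  obtain ⟨L, hL2, hL1⟩ : ∃ L : ℕ, (n:ℝ)^3 < 2^L ∧ (L:ℝ) + 1 ≤ 6 * ln := by
    refine ⟨3 * Nat.log 2 n + 3, ?_, ?_⟩
    · have h1 : n < 2^(Nat.log 2 n + 1) := Nat.lt_pow_succ_log_self (by norm_num) n
      have h2 : n^3 < (2^(Nat.log 2 n + 1))^3 :=
        Nat.pow_lt_pow_left h1 (by norm_num)
      have h3 : (2^(Nat.log 2 n + 1))^3 = 2^(3 * Nat.log 2 n + 3) := by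
        rw [← pow_mul]; ring_nf
      rw [h3] at h2
      exact_mod_cast h2
    · have hp : (2:ℕ)^(Nat.log 2 n) ≤ n := Nat.pow_log_le_self 2 (by omega)
      have hpR : (2:ℝ)^(Nat.log 2 n) ≤ (n:ℝ) := by exact_mod_cast hp
      have hm : (Nat.log 2 n : ℝ) * Real.log 2 ≤ ln := by
        have := Real.log_le_log (by positivity) hpR
        rwa [Real.log_pow] at this
      have hm4 : (4:ℝ) ≤ (Nat.log 2 n : ℝ) := by
        have : 4 ≤ Nat.log 2 n :=
          (Nat.le_log_iff_pow_le (by norm_num) (by omega)).mpr (by omega)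
        exact_mod_cast this
      have hm0 : (0:ℝ) ≤ (Nat.log 2 n : ℝ) := by positivity
      have hLcast : ((3 * Nat.log 2 n + 3 : ℕ):ℝ) = 3 * (Nat.log 2 n : ℝ) + 3 := by
        push_cast; ring
      rw [hLcast]
      nlinarith [hm, hm0, hm4, hlog2]
  -- key objects
  set M : ℝ := (2:ℝ)^(L+1)/a with hM_def
  set g : Fin (n-1) → Ω → ENNReal := fun i ω => ENNReal.ofReal (min (1/δ i ω) M) with hg_def
  set f : Ω → ENNReal := fun ω => ∑ i, g i ω with hf_def
  have hg_meas : ∀ i, Measurable (g i) := fun i =>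
    ENNReal.measurable_ofReal.comp ((measurable_const.div (hmeas i)).min measurable_const)
  have hf_meas : Measurable f := Finset.measurable_sum _ (fun i _ => hg_meas i)
  set T : ℝ := 16 * C * n * ln^5 / a with hT_def
  have hT : 0 < T := by positivity
  -- the bad sets
  set S : Fin (n-1) → ℕ → Set Ω := fun i k => {ω | δ i ω ≤ (1/2^k) * a} with hS_def
  have hS_meas : ∀ i k, MeasurableSet (S i k) := fun i k =>
    measurableSet_le (hmeas i) measurable_const
  have hS_bound : ∀ i k, P (S i k) ≤ ENNReal.ofReal (C * (1/2^k) * ln) := by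
    intro i k
    exact htail i (1/2^k) (by positivity) (by
      rw [div_le_one (by positivity)]
      exact one_le_pow₀ (by norm_num))
  -- per-coordinate integral bound
  have hint : ∀ i, ∫⁻ ω, g i ω ∂P ≤ ENNReal.ofReal (13 * C * ln^2 / a) := by
    intro i
    have hpt : ∀ ω, g i ω ≤ ENNReal.ofReal (1/a) +
        ∑ k ∈ Finset.range (L+1),
          Set.indicator (S i k) (fun _ => ENNReal.ofReal (2^(k+1)/a)) ω := by
      intro ω
      have hd := dyadic_bound a (δ i ω) ha (hpos i ω) L
      calc g i ω ≤ ENNReal.ofReal (1/a + ∑ k ∈ Finset.range (L+1),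
              (if δ i ω ≤ a / 2^k then 2^(k+1)/a else 0)) :=
            ENNReal.ofReal_le_ofReal hd
        _ = ENNReal.ofReal (1/a) + ENNReal.ofReal (∑ k ∈ Finset.range (L+1),
              (if δ i ω ≤ a / 2^k then 2^(k+1)/a else 0)) := by
            rw [ENNReal.ofReal_add (by positivity) (Finset.sum_nonneg (by
              intro k _; split_ifs with h
              · positivity
              · exact le_rfl))]
        _ = ENNReal.ofReal (1/a) + ∑ k ∈ Finset.range (L+1),
              ENNReal.ofReal (if δ i ω ≤ a / 2^k then 2^(k+1)/a else 0) := by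
            rw [ENNReal.ofReal_sum_of_nonneg (by
              intro k _; split_ifs with h
              · positivity
              · exact le_rfl)]
        _ = ENNReal.ofReal (1/a) + ∑ k ∈ Finset.range (L+1),
              Set.indicator (S i k) (fun _ => ENNReal.ofReal (2^(k+1)/a)) ω := by
            congr 1
            refine Finset.sum_congr rfl (fun k _ => ?_)
            have hmem : ω ∈ S i k ↔ δ i ω ≤ a / 2^k := by
              simp [hS_def, Set.mem_setOf_eq, div_eq_inv_mul]
            by_cases h : δ i ω ≤ a / 2^k
            · rw [if_pos h, Set.indicator_of_mem (hmem.mpr h)]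
            · rw [if_neg h, Set.indicator_of_notMem (fun hh => h (hmem.mp hh))]
              simp
    calc ∫⁻ ω, g i ω ∂P
        ≤ ∫⁻ ω, (ENNReal.ofReal (1/a) +
            ∑ k ∈ Finset.range (L+1),
              Set.indicator (S i k) (fun _ => ENNReal.ofReal (2^(k+1)/a)) ω) ∂P :=
          lintegral_mono hpt
      _ = ENNReal.ofReal (1/a) + ∑ k ∈ Finset.range (L+1),
            ENNReal.ofReal (2^(k+1)/a) * P (S i k) := by
          rw [lintegral_add_left measurable_const, lintegral_const, measure_univ, mul_one,
            lintegral_finset_sum _ (fun k _ =>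
              Measurable.indicator measurable_const (hS_meas i k))]
          congr 1
          exact Finset.sum_congr rfl (fun k _ => lintegral_indicator_const (hS_meas i k) _)
      _ ≤ ENNReal.ofReal (1/a) + ∑ k ∈ Finset.range (L+1),
            ENNReal.ofReal (2 * C * ln / a) := by
          gcongr with k hk
          calc ENNReal.ofReal (2^(k+1)/a) * P (S i k)
              ≤ ENNReal.ofReal (2^(k+1)/a) * ENNReal.ofReal (C * (1/2^k) * ln) := by
                gcongr
                exact hS_bound i k
            _ = ENNReal.ofReal ((2^(k+1)/a) * (C * (1/2^k) * ln)) :=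
                (ENNReal.ofReal_mul (by positivity)).symm
            _ = ENNReal.ofReal (2 * C * ln / a) := by
                congr 1
                field_simp
                ring
      _ = ENNReal.ofReal (1/a) + (L+1 : ℕ) * ENNReal.ofReal (2 * C * ln / a) := by
          rw [Finset.sum_const, Finset.card_range, nsmul_eq_mul]
      _ ≤ ENNReal.ofReal (13 * C * ln^2 / a) := by
          rw [← ENNReal.ofReal_natCast, ← ENNReal.ofReal_mul (by positivity),
            ← ENNReal.ofReal_add (by positivity) (by positivity)]
          apply ENNReal.ofReal_le_ofReal
          have hc : ((L+1 : ℕ):ℝ) = (L:ℝ) + 1 := by push_cast; ring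
          rw [hc]
          have e1 : ((L:ℝ)+1) * (2*C*ln/a) ≤ (6*ln) * (2*C*ln/a) :=
            mul_le_mul_of_nonneg_right hL1 (by positivity)
          have e2 : (1:ℝ)/a ≤ C*ln^2/a := by
            gcongr
            nlinarith
          have e3 : (6*ln) * (2*C*ln/a) = 12*C*ln^2/a := by ring
          have e4 : 13*C*ln^2/a = C*ln^2/a + 12*C*ln^2/a := by ring
          linarith [e1, e2, e3.le, e3.ge, e4.le, e4.ge]
  -- Markov
  have hmarkov : P {ω | ENNReal.ofReal T ≤ f ω} ≤ ENNReal.ofReal (C / ln) := by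
    have h1 : P {ω | ENNReal.ofReal T ≤ f ω} ≤ (∫⁻ ω, f ω ∂P) / ENNReal.ofReal T :=
      meas_ge_le_lintegral_div hf_meas.aemeasurable
        ((ENNReal.ofReal_pos.mpr hT).ne') ENNReal.ofReal_ne_top
    have h2 : (∫⁻ ω, f ω ∂P) ≤ ENNReal.ofReal (13 * C * n * ln^2 / a) := by
      calc (∫⁻ ω, f ω ∂P) = ∑ i, ∫⁻ ω, g i ω ∂P :=
            lintegral_finset_sum _ (fun i _ => hg_meas i)
        _ ≤ ∑ _i : Fin (n-1), ENNReal.ofReal (13 * C * ln^2 / a) :=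
            Finset.sum_le_sum (fun i _ => hint i)
        _ = ((n-1 : ℕ) : ENNReal) * ENNReal.ofReal (13 * C * ln^2 / a) := by
            rw [Finset.sum_const, nsmul_eq_mul, Finset.card_univ, Fintype.card_fin]
        _ ≤ ENNReal.ofReal (13 * C * n * ln^2 / a) := by
            rw [← ENNReal.ofReal_natCast, ← ENNReal.ofReal_mul (by positivity)]
            apply ENNReal.ofReal_le_ofReal
            have hcast : ((n-1 : ℕ):ℝ) ≤ (n:ℝ) := by
              have : (n-1 : ℕ) ≤ n := Nat.sub_le n 1
              exact_mod_cast this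
            have : ((n-1 : ℕ):ℝ) * (13 * C * ln^2 / a) ≤ (n:ℝ) * (13 * C * ln^2 / a) :=
              mul_le_mul_of_nonneg_right hcast (by positivity)
            calc ((n-1 : ℕ):ℝ) * (13 * C * ln^2 / a) ≤ (n:ℝ) * (13 * C * ln^2 / a) := this
              _ = 13 * C * n * ln^2 / a := by ring
    calc P {ω | ENNReal.ofReal T ≤ f ω}
        ≤ (∫⁻ ω, f ω ∂P) / ENNReal.ofReal T := h1
      _ ≤ ENNReal.ofReal (13 * C * n * ln^2 / a) / ENNReal.ofReal T :=
          ENNReal.div_le_div_right h2 _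
      _ = ENNReal.ofReal ((13 * C * n * ln^2 / a) / T) :=
          (ENNReal.ofReal_div_of_pos hT).symm
      _ ≤ ENNReal.ofReal (C / ln) := by
          apply ENNReal.ofReal_le_ofReal
          have heq : (13 * C * n * ln^2 / a) / T = 13/(16*ln^3) := by
            rw [hT_def]
            field_simp
          rw [heq, div_le_div_iff₀ (by positivity) hln_pos]
          have h8 : 13 * ln ≤ 16 * ln^3 := by nlinarith [hln1, hln_pos]
          have h9 : 16 * ln^3 ≤ C * (16 * ln^3) :=
            le_mul_of_one_le_left (by positivity) hC
          linarith
  -- bad event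
  have hbad : P (⋃ i, S i L) ≤ ENNReal.ofReal (C / ln) := by
    calc P (⋃ i, S i L) ≤ ∑' i, P (S i L) := measure_iUnion_le _
      _ = ∑ i, P (S i L) := tsum_fintype _
      _ ≤ ∑ _i : Fin (n-1), ENNReal.ofReal (C * (1/2^L) * ln) :=
          Finset.sum_le_sum (fun i _ => hS_bound i L)
      _ = ((n-1 : ℕ) : ENNReal) * ENNReal.ofReal (C * (1/2^L) * ln) := by
          rw [Finset.sum_const, nsmul_eq_mul, Finset.card_univ, Fintype.card_fin]
      _ ≤ ENNReal.ofReal (C / ln) := by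
          rw [← ENNReal.ofReal_natCast, ← ENNReal.ofReal_mul (by positivity)]
          apply ENNReal.ofReal_le_ofReal
          have hcast : ((n-1 : ℕ):ℝ) ≤ (n:ℝ) := by
            have : (n-1 : ℕ) ≤ n := Nat.sub_le n 1
            exact_mod_cast this
          have h1 : ((n-1 : ℕ):ℝ) * (C * (1/2^L) * ln) ≤ (n:ℝ) * (C * (1/2^L) * ln) :=
            mul_le_mul_of_nonneg_right hcast (by positivity)
          have h2 : (n:ℝ) * (C * (1/2^L) * ln) ≤ C / ln := by
            rw [le_div_iff₀ hln_pos]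
            have h3 : (n:ℝ) * ln * ln ≤ 2^L := by
              nlinarith [hL2, mul_le_mul hlnn hlnn hln_pos.le hn0.le, hn0]
            have h4 : (n:ℝ) * (C * (1/2^L) * ln) * ln = C * ((n*ln*ln)/2^L) := by
              ring
            rw [h4]
            have h5 : (n:ℝ)*ln*ln/2^L ≤ 1 := by
              rw [div_le_one (by positivity)]
              exact h3
            calc C * ((n:ℝ)*ln*ln/2^L) ≤ C * 1 :=
                  mul_le_mul_of_nonneg_left h5 hC0.le
              _ = C := mul_one C
          linarith
  -- subset relation
  have hsub : {ω | 16 * C * n * ln^5 / a < ∑ i, 1 / δ i ω} ⊆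
      (⋃ i, S i L) ∪ {ω | ENNReal.ofReal T ≤ f ω} := by
    intro ω hω
    by_cases hb : ω ∈ ⋃ i, S i L
    · exact Or.inl hb
    · refine Or.inr ?_
      have hp2 : (0:ℝ) < 2^L := by positivity
      have hgood : ∀ i, a / 2^L < δ i ω := by
        intro i
        by_contra hcon
        refine hb (Set.mem_iUnion.mpr ⟨i, ?_⟩)
        show δ i ω ≤ (1/2^L) * a
        rw [one_div_mul_eq_div]
        linarith [not_lt.mp hcon]
      have hmin : ∀ i, min (1/δ i ω) M = 1/δ i ω := by
        intro i
        apply min_eq_left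
        rw [hM_def, div_le_div_iff₀ (hpos i ω) ha, pow_succ]
        nlinarith [(div_lt_iff₀ hp2).mp (hgood i)]
      have hfω : f ω = ENNReal.ofReal (∑ i, 1/δ i ω) := by
        rw [hf_def]
        rw [ENNReal.ofReal_sum_of_nonneg (fun j _ => (one_div_pos.mpr (hpos j ω)).le)]
        refine Finset.sum_congr rfl (fun j _ => ?_)
        show ENNReal.ofReal (min (1/δ j ω) M) = ENNReal.ofReal (1/δ j ω)
        rw [hmin j]
      simp only [Set.mem_setOf_eq, hfω]
      exact ENNReal.ofReal_le_ofReal (le_of_lt hω)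
  -- conclusion
  calc P {ω | 16 * C * n * ln^5 / a < ∑ i, 1 / δ i ω}
      ≤ P ((⋃ i, S i L) ∪ {ω | ENNReal.ofReal T ≤ f ω}) := measure_mono hsub
    _ ≤ P (⋃ i, S i L) + P {ω | ENNReal.ofReal T ≤ f ω} := measure_union_le _ _
    _ ≤ ENNReal.ofReal (C / ln) + ENNReal.ofReal (C / ln) := add_le_add hbad hmarkov
    _ = ENNReal.ofReal (C/ln + C/ln) := (ENNReal.ofReal_add (by positivity) (by positivity)).symm
    _ ≤ ENNReal.ofReal (16 * C / ln) := by
        apply ENNReal.ofReal_le_ofReal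
        rw [← add_div]
        gcongr
        linarith
end
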